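/- arXiv:1010.3304 — 2 statements merged into one kernel-verified Lean document; each statement's English description precedes it below -/
import Mathlib

section
/- Suppose k_i = k for all i, where k ≥ 1 is a fixed positive integer (so every vertex of T_n at depth m < n has exactly k children). Fix l ≥ 0 and a vertex v at depth l. Then p_n(v) → (1/k^l)·(2 − 1/k^l − 1/k^{l+1}) as n → ∞; in particular, for the root, p_n(root) → 1 − 1/k. -/
/-!
A pair of distinct vertices avoids `v` exactly when both lie in the same component of `T_n - v`:
both outside the subtree of `v`, or both in the subtree of the same child of `v`. Hence
`l_n(v) = C(N, 2) - C(N - D, 2) - k C(S, 2)`, where `N = N(n)`, `D = N(n - l)` and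
`S = N(n - l - 1)` count the vertices of `T_n`, of the subtree at `v` and of the subtree at a child
of `v`.
Since `N(n - j) / N(n) → k^(-j)` and `C(a, 2) / C(N, 2)` behaves like `(a / N)^2`, the proportion
tends to `1 - (1 - k^(-l))^2 - k · k^(-2(l+1)) = k^(-l) (2 - k^(-l) - k^(-(l+1)))`.
-/

open Finset Filter

namespace TreeTraffic

/-- `beta k l = k 1 * k 2 * ⋯ * k l`, with `beta k 0 = 1`. -/
def beta (k : ℕ → ℕ) (l : ℕ) : ℕ := ∏ i ∈ Finset.range l, k (i + 1)

/-- `Ncard k n = ∑_{l=0}^n beta k l`, the number of vertices of `T_n`. -/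
def Ncard (k : ℕ → ℕ) (n : ℕ) : ℕ := ∑ l ∈ Finset.range (n + 1), beta k l

/-- The set of admissible sequences of length exactly `m`:
vertices at depth `m`, i.e. lists `[x_1, …, x_m]` with `x_i ∈ {1, …, k i}`. -/
def level (k : ℕ → ℕ) : ℕ → Finset (List ℕ)
  | 0 => {[]}
  | m + 1 => (level k m).biUnion (fun l => (Finset.Icc 1 (k (m + 1))).image (fun x => l ++ [x]))

/-- The vertex set of the truncated tree `T_n`: all admissible sequences of length `≤ n`. -/
def T (k : ℕ → ℕ) (n : ℕ) : Finset (List ℕ) :=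
  (Finset.range (n + 1)).biUnion (level k)

/-- Length of the longest common prefix of two lists. -/
def lcp : List ℕ → List ℕ → ℕ
  | a :: as, b :: bs => if a = b then lcp as bs + 1 else 0
  | _, _ => 0

/-- The graph distance between two vertices of the tree. -/
def treeDist (u w : List ℕ) : ℕ := (u.length - lcp u w) + (w.length - lcp u w)

/-- `v` lies on the (unique) geodesic path joining `u` and `w` in the tree. -/
def onPath (v u w : List ℕ) : Prop := treeDist u v + treeDist v w = treeDist u w

instance (v u w : List ℕ) : Decidable (onPath v u w) := by
  unfold onPath; infer_instance

/-- The traffic through `v` in `T_n`: the number of unordered pairs `{u, w}` of distinct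
vertices of `T_n` such that `v` lies on the unique path joining `u` and `w`. -/
def traffic (k : ℕ → ℕ) (n : ℕ) (v : List ℕ) : ℕ :=
  (((T k n).powersetCard 2).filter
    (fun s => ∃ u ∈ s, ∃ w ∈ s, u ≠ w ∧ onPath v u w)).card

/-- The proportion of the traffic of `T_n` passing through `v`:
`p_n(v) = l_n(v) / (N (N - 1) / 2)`. -/
noncomputable def trafficProp (k : ℕ → ℕ) (n : ℕ) (v : List ℕ) : ℝ :=
  (traffic k n v : ℝ) / ((Ncard k n : ℝ) * ((Ncard k n : ℝ) - 1) / 2)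

lemma card_filter_exists_ne_add_sum_choose_two {α β : Type*} [DecidableEq α] [DecidableEq β]
    (s : Finset α) (f : α → β) (B : Finset β) (hB : ∀ a ∈ s, f a ∈ B) :
    #{t ∈ s.powersetCard 2 | ∃ u ∈ t, ∃ w ∈ t, f u ≠ f w}
      + ∑ b ∈ B, (#{a ∈ s | f a = b}).choose 2 = (#s).choose 2 := by
  have hconst : {t ∈ s.powersetCard 2 | ¬ ∃ u ∈ t, ∃ w ∈ t, f u ≠ f w}
      = B.biUnion fun b => {a ∈ s | f a = b}.powersetCard 2 := by
    ext t
    simp only [mem_filter, mem_powersetCard, mem_biUnion, not_exists, not_and, not_not]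
    constructor
    · rintro ⟨⟨hts, hcard⟩, hf⟩
      obtain ⟨u, hu⟩ := card_pos.1 (by omega : 0 < #t)
      exact ⟨f u, hB u (hts hu), fun w hw => mem_filter.2 ⟨hts hw, hf w hw u hu⟩, hcard⟩
    · rintro ⟨b, -, htb, hcard⟩
      refine ⟨⟨htb.trans (filter_subset _ _), hcard⟩, fun u hu w hw => ?_⟩
      rw [(mem_filter.1 (htb hu)).2, (mem_filter.1 (htb hw)).2]
  have hdisj : (B : Set β).PairwiseDisjoint fun b => {a ∈ s | f a = b}.powersetCard 2 := by
    intro b _ b' _ hne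
    simp only [Function.onFun, disjoint_left, mem_powersetCard]
    rintro t ⟨htb, hcard⟩ ⟨htb', -⟩
    obtain ⟨u, hu⟩ := card_pos.1 (by omega : 0 < #t)
    exact hne ((mem_filter.1 (htb hu)).2.symm.trans (mem_filter.1 (htb' hu)).2)
  rw [← card_powersetCard, ← card_filter_add_card_filter_not (s := s.powersetCard 2)
    (fun t => ∃ u ∈ t, ∃ w ∈ t, f u ≠ f w), hconst, card_biUnion hdisj]
  simp only [card_powersetCard]

@[simp] lemma lcp_nil_left (w : List ℕ) : lcp [] w = 0 := by cases w <;> rfl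

@[simp] lemma lcp_nil_right (u : List ℕ) : lcp u [] = 0 := by cases u <;> rfl

@[simp] lemma lcp_cons_cons (a b : ℕ) (u w : List ℕ) :
    lcp (a :: u) (b :: w) = if a = b then lcp u w + 1 else 0 := rfl

lemma lcp_comm : ∀ u w : List ℕ, lcp u w = lcp w u
  | a :: u, b :: w => by
    by_cases h : a = b
    · simp [h, lcp_comm u w]
    · simp [h, Ne.symm h]
  | [], w => by simp
  | u, [] => by simp

lemma lcp_le_length_left : ∀ u w : List ℕ, lcp u w ≤ u.length
  | a :: u, b :: w => by
    by_cases h : a = b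
    · simpa [h] using lcp_le_length_left u w
    · simp [h]
  | [], w => by simp
  | u, [] => by simp

lemma lcp_le_length_right (u w : List ℕ) : lcp u w ≤ w.length :=
  lcp_comm u w ▸ lcp_le_length_left w u

lemma lcp_append_append : ∀ p u w : List ℕ, lcp (p ++ u) (p ++ w) = p.length + lcp u w
  | [], u, w => by simp
  | a :: p, u, w => by simp [lcp_append_append p u w]; ring

lemma lcp_append_left (v t : List ℕ) : lcp (v ++ t) v = v.length := by
  simpa using lcp_append_append v t []

lemma lcp_eq_length_iff_prefix : ∀ u w : List ℕ, lcp u w = u.length ↔ u <+: w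
  | [], w => by simp
  | a :: u, [] => by simp
  | a :: u, b :: w => by
    by_cases h : a = b
    · simp [h, lcp_eq_length_iff_prefix u w, List.cons_prefix_cons]
    · simp [h, List.cons_prefix_cons]

lemma lcp_lt_length_iff_not_prefix (u w : List ℕ) : lcp u w < u.length ↔ ¬ u <+: w := by
  rw [← lcp_eq_length_iff_prefix]
  have := lcp_le_length_left u w
  omega

lemma min_lcp_le_lcp : ∀ u v w : List ℕ, min (lcp u v) (lcp v w) ≤ lcp u w
  | a :: u, b :: v, c :: w => by
    by_cases hab : a = b
    · by_cases hbc : b = c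
      · have := min_lcp_le_lcp u v w
        simp only [lcp_cons_cons, hab, hbc, if_true]
        omega
      · simp [hab, hbc]
    · simp [hab]
  | [], v, w => by simp
  | u, [], w => by simp
  | a :: u, b :: v, [] => by simp

lemma lcp_append_of_lt_length {v w : List ℕ} (h : lcp v w < v.length) (t : List ℕ) :
    lcp (v ++ t) w = lcp v w := by
  induction v generalizing w with
  | nil => simp at h
  | cons a v ih =>
    cases w with
    | nil => simp
    | cons b w =>
      by_cases hab : a = b
      · simp only [List.cons_append, lcp_cons_cons, hab, if_true, List.length_cons] at h ⊢
        rw [ih (by omega)]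
      · simp [hab]

lemma lcp_eq_zero_iff_head?_ne {t s : List ℕ} (h : t ≠ s) : lcp t s = 0 ↔ t.head? ≠ s.head? := by
  cases t <;> cases s <;> simp_all

lemma onPath_iff_length_add_lcp (v u w : List ℕ) :
    onPath v u w ↔ v.length + lcp u w = lcp u v + lcp v w := by
  have := lcp_le_length_left u v
  have := lcp_le_length_right u v
  have := lcp_le_length_left v w
  have := lcp_le_length_right v w
  have := lcp_le_length_left u w
  have := lcp_le_length_right u w
  unfold onPath treeDist
  omega

/-- `none`: `u` lies outside the subtree of `v`; `some none`: `u = v`; `some (some x)`: `u` lies in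
the subtree of the child `v ++ [x]`. These are the components of the tree with `v` removed,
together with `{v}`. -/
def branch (v u : List ℕ) : Option (Option ℕ) := if v <+: u then some u[v.length]? else none

lemma branch_append (v t : List ℕ) : branch v (v ++ t) = some t.head? := by
  simp [branch, List.getElem?_append_right, List.head?_eq_getElem?]

lemma branch_eq_none_iff {v u : List ℕ} : branch v u = none ↔ ¬ v <+: u := by
  simp [branch]

lemma branch_eq_some_none_iff {v u : List ℕ} : branch v u = some none ↔ u = v := by
  constructor
  · intro h
    obtain ⟨t, rfl⟩ : v <+: u := by by_contra hu; simp [branch, hu] at h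
    simpa [branch_append] using h
  · rintro rfl
    simpa using branch_append u []

lemma branch_eq_some_some_iff {v u : List ℕ} {x : ℕ} :
    branch v u = some (some x) ↔ v ++ [x] <+: u := by
  constructor
  · intro h
    obtain ⟨t, rfl⟩ : v <+: u := by by_contra hu; simp [branch, hu] at h
    rw [branch_append, Option.some_inj, List.head?_eq_some_iff] at h
    obtain ⟨t, rfl⟩ := h
    simp
  · rintro ⟨t, rfl⟩
    simpa using branch_append v (x :: t)

lemma onPath_iff_branch_ne {v u w : List ℕ} (h : u ≠ w) :
    onPath v u w ↔ branch v u ≠ branch v w := by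
  rw [onPath_iff_length_add_lcp]
  by_cases hu : v <+: u <;> by_cases hw : v <+: w
  · obtain ⟨t, rfl⟩ := hu
    obtain ⟨s, rfl⟩ := hw
    have hts : t ≠ s := by rintro rfl; exact h rfl
    rw [branch_append, branch_append, lcp_append_append, lcp_append_left, lcp_comm v,
      lcp_append_left, Ne, Option.some_inj, ← Ne, ← lcp_eq_zero_iff_head?_ne hts]
    omega
  · obtain ⟨t, rfl⟩ := hu
    have hlt := (lcp_lt_length_iff_not_prefix v w).2 hw
    simp [branch, hw, lcp_append_of_lt_length hlt, lcp_append_left]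
  · obtain ⟨s, rfl⟩ := hw
    have hlt := (lcp_lt_length_iff_not_prefix v u).2 hu
    simp only [branch, hu, List.prefix_append, if_true, if_false, ne_eq, reduceCtorEq,
      not_false_eq_true, iff_true, lcp_comm u, lcp_append_of_lt_length hlt, lcp_comm v (v ++ s),
      lcp_append_left]
    omega
  · have ha := (lcp_lt_length_iff_not_prefix v u).2 hu
    have hb := (lcp_lt_length_iff_not_prefix v w).2 hw
    have hc := min_lcp_le_lcp u v w
    rw [lcp_comm v u] at ha
    simp only [branch, hu, hw, if_false, ne_eq, not_true_eq_false, iff_false]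
    omega

lemma traffic_eq_card_filter_branch_ne (k : ℕ → ℕ) (n : ℕ) (v : List ℕ) :
    traffic k n v
      = #{t ∈ (T k n).powersetCard 2 | ∃ u ∈ t, ∃ w ∈ t, branch v u ≠ branch v w} := by
  refine congrArg card (filter_congr fun t _ => ?_)
  refine ⟨fun ⟨u, hu, w, hw, hne, hvuw⟩ => ⟨u, hu, w, hw, (onPath_iff_branch_ne hne).1 hvuw⟩,
    fun ⟨u, hu, w, hw, hne⟩ => ?_⟩
  have huw : u ≠ w := by rintro rfl; exact hne rfl
  exact ⟨u, hu, w, hw, huw, (onPath_iff_branch_ne huw).2 hne⟩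

lemma length_eq_of_mem_level {k : ℕ → ℕ} {m : ℕ} {u : List ℕ} (h : u ∈ level k m) :
    u.length = m := by
  induction m generalizing u with
  | zero => simpa [level] using h
  | succ m ih =>
    simp only [level, mem_biUnion, mem_image] at h
    obtain ⟨u, hu, x, -, rfl⟩ := h
    simp [ih hu]

lemma card_level (k : ℕ → ℕ) (m : ℕ) : #(level k m) = beta k m := by
  induction m with
  | zero => simp [level, beta]
  | succ m ih =>
    rw [level, card_biUnion, sum_congr rfl fun u _ =>
      card_image_of_injective _ fun x y h => by simpa using h]
    · simp [ih, beta, prod_range_succ]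
    · intro u₁ _ u₂ _ hne
      simp only [Function.onFun, disjoint_left, mem_image]
      rintro _ ⟨x, -, rfl⟩ ⟨y, -, h⟩
      exact hne (List.append_inj' h rfl).1.symm

lemma card_T (k : ℕ → ℕ) (n : ℕ) : #(T k n) = Ncard k n := by
  rw [T, card_biUnion]
  · simp [card_level, Ncard]
  · intro m₁ _ m₂ _ hne
    simp only [Function.onFun, disjoint_left]
    intro u hu₁ hu₂
    exact hne ((length_eq_of_mem_level hu₁).symm.trans (length_eq_of_mem_level hu₂))

lemma Ncard_mono (k : ℕ → ℕ) : Monotone (Ncard k) := fun _ _ h =>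
  sum_le_sum_of_subset (range_subset_range.2 (by omega))

lemma tendsto_choose_two_div_choose_two {a N : ℕ → ℕ} {α : ℝ} (hN : Tendsto N atTop atTop)
    (ha : Tendsto (fun n => (a n : ℝ) / N n) atTop (nhds α)) :
    Tendsto (fun n => ((a n).choose 2 : ℝ) / (N n).choose 2) atTop (nhds (α ^ 2)) := by
  have he : Tendsto (fun n => ((N n : ℝ))⁻¹) atTop (nhds 0) :=
    (tendsto_natCast_atTop_atTop.comp hN).inv_tendsto_atTop
  have hlim := (ha.mul (ha.sub he)).div (tendsto_const_nhds.sub he) (by norm_num : (1 : ℝ) - 0 ≠ 0)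
  rw [sub_zero, sub_zero, div_one, ← sq] at hlim
  refine hlim.congr' ?_
  filter_upwards [hN.eventually_ge_atTop 2] with n hn
  have hN2 : (2 : ℝ) ≤ N n := by exact_mod_cast hn
  have : (N n : ℝ) ≠ 0 := by linarith
  have : (N n : ℝ) - 1 ≠ 0 := by linarith
  simp only [Pi.div_apply, Nat.cast_choose_two]
  field_simp

section Regular

variable {K : ℕ}

lemma mem_level_const {m : ℕ} {u : List ℕ} :
    u ∈ level (fun _ => K) m ↔ u.length = m ∧ ∀ a ∈ u, a ∈ Icc 1 K := by
  induction m generalizing u with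
  | zero =>
    simp only [level, mem_singleton, List.length_eq_zero_iff, iff_self_and]
    rintro rfl
    simp
  | succ m ih =>
    simp only [level, mem_biUnion, mem_image, ih]
    constructor
    · rintro ⟨u, ⟨rfl, hu⟩, x, hx, rfl⟩
      simp only [List.length_append, List.length_singleton, List.mem_append,
        List.mem_singleton, true_and]
      rintro a (ha | rfl)
      exacts [hu a ha, hx]
    · rintro ⟨hlen, hu⟩
      have hne : u ≠ [] := by rintro rfl; simp at hlen
      refine ⟨u.dropLast, ⟨by simp [hlen], fun a ha => hu a (List.dropLast_subset u ha)⟩,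
        u.getLast hne, hu _ (List.getLast_mem hne), List.dropLast_concat_getLast hne⟩

lemma mem_T_const {n : ℕ} {u : List ℕ} :
    u ∈ T (fun _ => K) n ↔ u.length ≤ n ∧ ∀ a ∈ u, a ∈ Icc 1 K := by
  simp only [T, mem_biUnion, mem_range, mem_level_const]
  exact ⟨fun ⟨m, hm, hlen, hu⟩ => ⟨by omega, hu⟩, fun ⟨hlen, hu⟩ => ⟨_, by omega, rfl, hu⟩⟩

lemma filter_prefix_T_const {n : ℕ} {p : List ℕ} (hp : ∀ a ∈ p, a ∈ Icc 1 K)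
    (hlen : p.length ≤ n) :
    {u ∈ T (fun _ => K) n | p <+: u} = (T (fun _ => K) (n - p.length)).image (p ++ ·) := by
  ext u
  simp only [mem_filter, mem_image, mem_T_const]
  constructor
  · rintro ⟨⟨htlen, hu⟩, t, rfl⟩
    exact ⟨t, ⟨by simp at htlen; omega, fun a ha => hu a (by simp [ha])⟩, rfl⟩
  · rintro ⟨t, ⟨htlen, ht⟩, rfl⟩
    refine ⟨⟨by simp; omega, fun a ha => ?_⟩, t, rfl⟩
    rcases List.mem_append.1 ha with ha | ha
    exacts [hp a ha, ht a ha]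

lemma card_filter_prefix_T_const {n : ℕ} {p : List ℕ} (hp : ∀ a ∈ p, a ∈ Icc 1 K)
    (hlen : p.length ≤ n) :
    #{u ∈ T (fun _ => K) n | p <+: u} = Ncard (fun _ => K) (n - p.length) := by
  rw [filter_prefix_T_const hp hlen, card_image_of_injective _ fun _ _ => List.append_cancel_left,
    card_T]

lemma traffic_add_choose_two {l n : ℕ} {v : List ℕ} (hv : v ∈ level (fun _ => K) l)
    (hn : l < n) :
    traffic (fun _ => K) n v
      + ((Ncard (fun _ => K) n - Ncard (fun _ => K) (n - l)).choose 2
        + K * (Ncard (fun _ => K) (n - l - 1)).choose 2)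
      = (Ncard (fun _ => K) n).choose 2 := by
  obtain ⟨hvl, hvK⟩ := mem_level_const.1 hv
  set Tn := T (fun _ => K) n
  have hB : ∀ u ∈ Tn, branch v u ∈ insert none (insert (some none)
      ((Icc 1 K).image fun x => some (some x))) := by
    intro u hu
    match h : branch v u with
    | none => simp
    | some none => simp
    | some (some x) =>
      have hx : x ∈ u := (branch_eq_some_some_iff.1 h).subset (by simp)
      simpa using (mem_T_const.1 hu).2 x hx
  have houtside : #{u ∈ Tn | branch v u = none}
      = Ncard (fun _ => K) n - Ncard (fun _ => K) (n - l) := by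
    have := card_filter_add_card_filter_not (s := Tn) (v <+: ·)
    rw [card_filter_prefix_T_const hvK (by omega), hvl, card_T] at this
    simp only [branch_eq_none_iff]
    omega
  have hself : (#{u ∈ Tn | branch v u = some none}).choose 2 = 0 := by
    refine Nat.choose_eq_zero_of_lt (Nat.lt_succ_of_le (card_le_one.2 fun u hu w hw => ?_))
    simp only [mem_filter, branch_eq_some_none_iff] at hu hw
    rw [hu.2, hw.2]
  have hchild : ∀ x ∈ Icc 1 K,
      #{u ∈ Tn | branch v u = some (some x)} = Ncard (fun _ => K) (n - l - 1) := by
    intro x hx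
    have hvx : ∀ a ∈ v ++ [x], a ∈ Icc 1 K := by
      simp only [List.mem_append, List.mem_singleton]
      rintro a (ha | rfl)
      exacts [hvK a ha, hx]
    simp only [branch_eq_some_some_iff]
    rw [card_filter_prefix_T_const hvx (by simp; omega)]
    simp [hvl, Nat.sub_sub]
  have := card_filter_exists_ne_add_sum_choose_two Tn (branch v) _ hB
  rw [sum_insert (by simp), sum_insert (by simp), sum_image (by simp), hself,
    sum_congr rfl fun x hx => congrArg (·.choose 2) (hchild x hx), sum_const, houtside,
    ← traffic_eq_card_filter_branch_ne, card_T] at this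
  simpa using this

lemma Ncard_const (n : ℕ) : Ncard (fun _ => K) n = ∑ m ∈ range (n + 1), K ^ m := by
  simp [Ncard, beta]

lemma Ncard_const_eq_add_pow_mul {j n : ℕ} (hj : j ≤ n) :
    Ncard (fun _ => K) n = ∑ m ∈ range j, K ^ m + K ^ j * Ncard (fun _ => K) (n - j) := by
  rw [Ncard_const, Ncard_const, show n + 1 = j + (n - j + 1) by omega, sum_range_add, mul_sum]
  simp only [pow_add]

lemma add_one_le_Ncard_const (hK : 1 ≤ K) (n : ℕ) : n + 1 ≤ Ncard (fun _ => K) n :=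
  calc n + 1 = ∑ _m ∈ range (n + 1), 1 := by simp
    _ ≤ Ncard (fun _ => K) n := by
      rw [Ncard_const]; exact sum_le_sum fun m _ => Nat.one_le_pow m K hK

lemma tendsto_Ncard_const (hK : 1 ≤ K) : Tendsto (Ncard (fun _ => K)) atTop atTop :=
  tendsto_atTop_mono (add_one_le_Ncard_const hK) (tendsto_add_atTop_nat 1)

lemma tendsto_Ncard_const_sub_div (hK : 1 ≤ K) (j : ℕ) :
    Tendsto (fun n => (Ncard (fun _ => K) (n - j) : ℝ) / Ncard (fun _ => K) n) atTop
      (nhds ((K : ℝ) ^ j)⁻¹) := by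
  have hD : Tendsto (fun n => (Ncard (fun _ => K) (n - j) : ℝ)) atTop atTop :=
    tendsto_natCast_atTop_atTop.comp ((tendsto_Ncard_const hK).comp (tendsto_sub_atTop_nat j))
  have hKj : (K : ℝ) ^ j ≠ 0 := pow_ne_zero j (by exact_mod_cast (by omega : K ≠ 0))
  have hlim := (((tendsto_const_nhds (x := ∑ m ∈ range j, (K : ℝ) ^ m)).div_atTop hD).add_const
    ((K : ℝ) ^ j)).inv₀ (by rwa [zero_add])
  rw [zero_add] at hlim
  refine hlim.congr' ?_
  filter_upwards [eventually_ge_atTop j] with n hn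
  have hD0 : (Ncard (fun _ => K) (n - j) : ℝ) ≠ 0 := by
    have := add_one_le_Ncard_const hK (n - j)
    exact_mod_cast (by omega : Ncard (fun _ => K) (n - j) ≠ 0)
  rw [Ncard_const_eq_add_pow_mul hn]
  push_cast
  field_simp

lemma trafficProp_const_eq (hK : 1 ≤ K) {l n : ℕ} {v : List ℕ} (hv : v ∈ level (fun _ => K) l)
    (hn : l < n) :
    trafficProp (fun _ => K) n v
      = 1 - ((Ncard (fun _ => K) n - Ncard (fun _ => K) (n - l)).choose 2 : ℝ)
          / (Ncard (fun _ => K) n).choose 2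
        - K * (((Ncard (fun _ => K) (n - l - 1)).choose 2 : ℝ)
          / (Ncard (fun _ => K) n).choose 2) := by
  have hN2 : 2 ≤ Ncard (fun _ => K) n := by have := add_one_le_Ncard_const hK n; omega
  have hpos : ((Ncard (fun _ => K) n).choose 2 : ℝ) ≠ 0 := by
    exact_mod_cast (Nat.choose_pos hN2).ne'
  have htraffic := congrArg (Nat.cast : ℕ → ℝ) (traffic_add_choose_two hv hn)
  push_cast at htraffic
  rw [trafficProp, ← Nat.cast_choose_two, eq_sub_of_add_eq htraffic]
  field_simp
  ring

lemma tendsto_trafficProp_const (hK : 1 ≤ K) {l : ℕ} {v : List ℕ}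
    (hv : v ∈ level (fun _ => K) l) :
    Tendsto (fun n => trafficProp (fun _ => K) n v) atTop
      (nhds (1 - (1 - ((K : ℝ) ^ l)⁻¹) ^ 2 - K * (((K : ℝ) ^ (l + 1))⁻¹) ^ 2)) := by
  have hN := tendsto_Ncard_const hK
  have houtside : Tendsto (fun n => ((Ncard (fun _ => K) n - Ncard (fun _ => K) (n - l) : ℕ) : ℝ)
      / Ncard (fun _ => K) n) atTop (nhds (1 - ((K : ℝ) ^ l)⁻¹)) := by
    refine (tendsto_const_nhds.sub (tendsto_Ncard_const_sub_div hK l)).congr' ?_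
    filter_upwards [hN.eventually_ge_atTop 1] with n hn
    have : (Ncard (fun _ => K) n : ℝ) ≠ 0 := by exact_mod_cast (by omega : Ncard _ n ≠ 0)
    rw [Nat.cast_sub (Ncard_mono _ (Nat.sub_le n l)), sub_div, div_self this]
  have hchild : Tendsto (fun n => (Ncard (fun _ => K) (n - l - 1) : ℝ) / Ncard (fun _ => K) n)
      atTop (nhds ((K : ℝ) ^ (l + 1))⁻¹) := by
    simpa only [Nat.sub_sub] using tendsto_Ncard_const_sub_div hK (l + 1)
  have hlim := ((tendsto_const_nhds (x := (1 : ℝ))).sub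
    (tendsto_choose_two_div_choose_two hN houtside)).sub
      ((tendsto_choose_two_div_choose_two hN hchild).const_mul (K : ℝ))
  refine hlim.congr' ?_
  filter_upwards [eventually_gt_atTop l] with n hn
  exact (trafficProp_const_eq hK hv hn).symm

end Regular

/-- In the `k`-regular case (every vertex at depth `m < n` has exactly `k` children),
for a vertex `v` at depth `l` the proportion of traffic through `v` converges to
`(1/k^l) (2 - 1/k^l - 1/k^(l+1))`; in particular for the root it converges to `1 - 1/k`. -/
theorem traffic_prop_tendsto_regular (K : ℕ) (hK : 1 ≤ K) (l : ℕ) (v : List ℕ)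
    (hv : v ∈ level (fun _ => K) l) :
    Tendsto (fun n => trafficProp (fun _ => K) n v) atTop
      (nhds ((1 / (K : ℝ) ^ l) * (2 - 1 / (K : ℝ) ^ l - 1 / (K : ℝ) ^ (l + 1)))) ∧
    Tendsto (fun n => trafficProp (fun _ => K) n []) atTop
      (nhds (1 - 1 / (K : ℝ))) := by
  have hK0 : (K : ℝ) ≠ 0 := by exact_mod_cast (by omega : K ≠ 0)
  have hlimit (l : ℕ) : 1 - (1 - ((K : ℝ) ^ l)⁻¹) ^ 2 - K * (((K : ℝ) ^ (l + 1))⁻¹) ^ 2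
      = (1 / (K : ℝ) ^ l) * (2 - 1 / (K : ℝ) ^ l - 1 / (K : ℝ) ^ (l + 1)) := by
    field_simp
    ring
  refine ⟨hlimit l ▸ tendsto_trafficProp_const hK hv, ?_⟩
  have hroot := tendsto_trafficProp_const hK (l := 0) (v := []) (by simp [level])
  rw [hlimit 0] at hroot
  norm_num at hroot ⊢
  exact hroot

end TreeTraffic
end

section
/- With the above notation, define for n ≥ l+1 the quantity L_n = (N(n) − 1 − c_n)·c_n + (k_{l+1}(k_{l+1}−1)/2)·(c_n/k_{l+1})² + (N(n) − 1). Then 2·L_n / (N(n)·(N(n)−1)) → (1/β(l))·(2 − 1/β(l) − 1/β(l+1)) as n → ∞. -/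
/-!
Write `S n = ∑_{j=l+1}^n β(j)`, `B = β(l)` and `K = k_{l+1}`. Then `N(n) = N(l) + S n`,
`c_n = S n / B` and `β(l+1) = B K`, so the ratio is a fixed rational function of `S n`
whose numerator and denominator both have degree two. Since `S n ≥ n - l → ∞`, the ratio
tends to the quotient of the leading coefficients, `(1/B)(2 - 1/B - 1/(B K))`.
-/

open Finset Filter Topology

namespace TreeTraffic

/-- `c k l n = (∑_{j=l+1}^n beta k j) / beta k l`, an integer since
`beta k l` divides `beta k j` for every `j > l`. -/
def c (k : ℕ → ℕ) (l n : ℕ) : ℕ := (∑ j ∈ Finset.Icc (l + 1) n, beta k j) / beta k l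

theorem beta_succ (k : ℕ → ℕ) (l : ℕ) : beta k (l + 1) = beta k l * k (l + 1) :=
  prod_range_succ _ _

theorem one_le_beta {k : ℕ → ℕ} (hk : ∀ i, 1 ≤ k i) (l : ℕ) : 1 ≤ beta k l :=
  one_le_prod' fun i _ => hk (i + 1)

theorem beta_dvd_beta (k : ℕ → ℕ) {l j : ℕ} (h : l ≤ j) : beta k l ∣ beta k j :=
  prod_dvd_prod_of_subset _ _ _ (range_subset_range.mpr h)

theorem Ncard_eq_add_sum_Icc (k : ℕ → ℕ) {l n : ℕ} (h : l ≤ n) :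
    Ncard k n = Ncard k l + ∑ j ∈ Icc (l + 1) n, beta k j := by
  rw [Ncard, Ncard, ← Ico_add_one_right_eq_Icc, sum_range_add_sum_Ico _ (by omega)]

theorem cast_c (k : ℕ → ℕ) (l n : ℕ) :
    (c k l n : ℝ) = (∑ j ∈ Icc (l + 1) n, beta k j : ℕ) / (beta k l : ℝ) := by
  rcases eq_or_ne (beta k l) 0 with h | h
  · simp [c, h]
  · refine Nat.cast_div (dvd_sum fun j hj => beta_dvd_beta k ?_) (Nat.cast_ne_zero.mpr h)
    have := (mem_Icc.mp hj).1
    omega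

theorem tendsto_sum_Icc_beta_atTop {k : ℕ → ℕ} (hk : ∀ i, 1 ≤ k i) (l : ℕ) :
    Tendsto (fun n => ((∑ j ∈ Icc (l + 1) n, beta k j : ℕ) : ℝ)) atTop atTop := by
  have hle : ∀ n, n - l ≤ ∑ j ∈ Icc (l + 1) n, beta k j := fun n =>
    calc n - l = #(Icc (l + 1) n) • 1 := by simp
      _ ≤ _ := card_nsmul_le_sum _ _ _ fun j _ => one_le_beta hk j
  exact tendsto_natCast_atTop_atTop.comp (tendsto_atTop_mono hle (tendsto_sub_atTop_nat l))

theorem tendsto_traffic_ratio_atTop (A B K : ℝ) (hB : B ≠ 0) (hK : K ≠ 0) :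
    Tendsto (fun s : ℝ => 2 * ((A + s - 1 - s / B) * (s / B) +
        K * (K - 1) / 2 * (s / B / K) ^ 2 + (A + s - 1)) / ((A + s) * (A + s - 1))) atTop
      (𝓝 (1 / B * (2 - 1 / B - 1 / (B * K)))) := by
  -- `G u` is the ratio at `s = 1 / u` with numerator and denominator divided by `s ^ 2`.
  set G : ℝ → ℝ := fun u => 2 * (((A - 1) * u + 1 - 1 / B) * (1 / B) +
      K * (K - 1) / 2 * (1 / (B * K)) ^ 2 + (A - 1) * u ^ 2 + u) /
        ((A * u + 1) * ((A - 1) * u + 1))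
  have hG : ContinuousAt G 0 := ContinuousAt.div (by fun_prop) (by fun_prop) (by norm_num)
  have hG0 : G 0 = 1 / B * (2 - 1 / B - 1 / (B * K)) := by
    simp only [G]
    field_simp
    ring
  rw [← hG0]
  refine (hG.tendsto.comp tendsto_inv_atTop_zero).congr' ?_
  filter_upwards [eventually_gt_atTop 0] with s hs
  have hden : (A * s⁻¹ + 1) * ((A - 1) * s⁻¹ + 1) = (A + s) * (A + s - 1) / s ^ 2 := by
    field_simp
    ring
  simp only [Function.comp, G, hden]
  field_simp
  ring

/-- With `L_n = (N(n) - 1 - c_n) c_n + (k_{l+1}(k_{l+1}-1)/2)(c_n/k_{l+1})² + (N(n) - 1)`,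
we have `2 L_n / (N(n) (N(n)-1)) → (1/β(l)) (2 - 1/β(l) - 1/β(l+1))` as `n → ∞`. -/
theorem traffic_formula_tendsto (k : ℕ → ℕ) (hk : ∀ i, 1 ≤ k i) (l : ℕ)
    (L : ℕ → ℝ)
    (hL : ∀ n, l + 1 ≤ n →
      L n = ((Ncard k n : ℝ) - 1 - (c k l n : ℝ)) * (c k l n : ℝ) +
        ((k (l + 1) : ℝ) * ((k (l + 1) : ℝ) - 1) / 2) *
          ((c k l n : ℝ) / (k (l + 1) : ℝ)) ^ 2 +
        ((Ncard k n : ℝ) - 1)) :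
    Tendsto
      (fun n => 2 * L n / ((Ncard k n : ℝ) * ((Ncard k n : ℝ) - 1))) atTop
      (nhds ((1 / (beta k l : ℝ)) *
        (2 - 1 / (beta k l : ℝ) - 1 / (beta k (l + 1) : ℝ)))) := by
  have hB : (beta k l : ℝ) ≠ 0 :=
    Nat.cast_ne_zero.mpr (Nat.one_le_iff_ne_zero.mp (one_le_beta hk l))
  have hK : (k (l + 1) : ℝ) ≠ 0 := Nat.cast_ne_zero.mpr (Nat.one_le_iff_ne_zero.mp (hk (l + 1)))
  have hlim := (tendsto_traffic_ratio_atTop (Ncard k l) _ _ hB hK).comp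
    (tendsto_sum_Icc_beta_atTop hk l)
  rw [beta_succ, Nat.cast_mul]
  refine hlim.congr' ?_
  filter_upwards [eventually_ge_atTop (l + 1)] with n hn
  rw [Function.comp_apply, hL n hn, Ncard_eq_add_sum_Icc k (by omega : l ≤ n), cast_c,
    Nat.cast_add]

end TreeTraffic
end
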